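/- Guarded sequential composition is a contraction in its second argument: if P always communicates an event from U before it does a ✓ (every trace of P ending in ✓ contains an event from U before ✓), then for all Q, Q', d_U(P ; Q, P ; Q') ≤ (1/2)·d_U(Q, Q'). -/

import Mathlib

open scoped Classical

namespace CSPLL

variable {E : Type*}

/-- Events: `none` is the termination signal ✓, `some a` is a visible event. -/
abbrev Ev (E : Type*) := Option E

/-- A member of `Σ^{*✓}`: the termination event ✓ may occur only as the last element. -/
def ValidTrace (s : List (Ev E)) : Prop := (none : Ev E) ∉ s.dropLast

/-- The semantic domain `T↓`: pairs `(T, D)` of (behavioural) traces and divergences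
satisfying the axioms of the divergence-strict traces model. -/
structure TD (E : Type*) where
  T : Set (List (Ev E))
  D : Set (List (Ev E))
  valid : ∀ s ∈ T, ValidTrace s
  d_sub : D ⊆ T
  nonempty : [] ∈ T
  prefix_closed : ∀ s t : List (Ev E), s ++ t ∈ T → s ∈ T
  tick_div : ∀ s : List (Ev E), s ++ [none] ∈ D → s ∈ D
  div_ext : ∀ s t : List (Ev E), s ∈ D → (none : Ev E) ∉ s → ValidTrace t → s ++ t ∈ D

/-- Raw trace/divergence pairs. -/
abbrev Pair (E : Type*) := Set (List (Ev E)) × Set (List (Ev E))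

def TD.pair (P : TD E) : Pair E := (P.T, P.D)

/-- `lengthU U s` counts the occurrences of events from `U` in the trace `s`. -/
noncomputable def lengthU (U : Set E) (s : List (Ev E)) : ℕ :=
  (s.filter fun x => decide (∃ a ∈ U, x = some a)).length

/-- Restriction `(T,D) ↾_U n` of a trace/divergence pair to `U`-length `n`. -/
noncomputable def restrict (U : Set E) (n : ℕ) (P : Pair E) : Pair E :=
  let D' := P.2 ∪ {u | ∃ s t, s ∈ P.1 ∧ (none : Ev E) ∉ s ∧ lengthU U s = n ∧
                       ValidTrace t ∧ u = s ++ t}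
  (D' ∪ {s ∈ P.1 | lengthU U s ≤ n}, D')

/-- The metric `d_U(P,Q) = inf {2^{-n} | P ↾_U n = Q ↾_U n}` (taken in `[0,1]`). -/
noncomputable def dU (U : Set E) (P Q : Pair E) : ℝ :=
  sInf {x : ℝ | ∃ n : ℕ, restrict U n P = restrict U n Q ∧ x = (1 / 2 : ℝ) ^ n}

noncomputable def dTD (U : Set E) (P Q : TD E) : ℝ := dU U P.pair Q.pair

/-- Sequential composition `P ; Q` on trace/divergence pairs. -/
def seqP (P Q : TD E) : Pair E :=
  let D' := P.D ∪ {x | ∃ t s, t ++ [(none : Ev E)] ∈ P.T ∧ s ∈ Q.D ∧ x = t ++ s}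
  (D' ∪ {s ∈ P.T | (none : Ev E) ∉ s} ∪
     {x | ∃ t s, t ++ [(none : Ev E)] ∈ P.T ∧ s ∈ Q.T ∧ x = t ++ s}, D')

/-!
If `Q` and `Q'` agree up to `U`-length `n`, then `P ; Q` and `P ; Q'` agree up to `U`-length
`n + 1`: a behaviour of `P ; Q` that reaches `Q` at all has passed through a ✓ of `P`, and by
guardedness `P` has already performed a `U`-event by then, so only the first `n` `U`-events of
`Q` can be observed within `U`-length `n + 1`. Taking infima over `n` gives the factor `1/2`.
-/

section Traces

variable {U : Set E}

theorem lengthU_append (a b : List (Ev E)) :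
    lengthU U (a ++ b) = lengthU U a + lengthU U b := by
  simp [lengthU, List.filter_append]

theorem lengthU_pos {t : List (Ev E)} {a : E} (ha : a ∈ U) (hat : (some a : Ev E) ∈ t) :
    0 < lengthU U t := by
  rw [lengthU, ← List.countP_eq_length_filter, List.countP_pos_iff]
  exact ⟨some a, hat, decide_eq_true ⟨a, ha, rfl⟩⟩

theorem exists_append_lengthU_eq :
    ∀ (w : List (Ev E)) {m : ℕ}, m ≤ lengthU U w → ∃ a b, w = a ++ b ∧ lengthU U a = m
  | [], m, hm => ⟨[], [], rfl, by simp_all [lengthU]⟩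
  | x :: w, 0, _ => ⟨[], x :: w, rfl, by simp [lengthU]⟩
  | x :: w, m + 1, hm => by
    have hx1 : lengthU U [x] ≤ 1 := by
      by_cases hx : ∃ a ∈ U, x = some a <;> simp [lengthU, hx]
    have hxw := lengthU_append (U := U) [x] w
    obtain ⟨a, b, rfl, ha⟩ := exists_append_lengthU_eq w (m := m + 1 - lengthU U [x])
      (by simp only [List.singleton_append] at hxw; omega)
    have hxa := lengthU_append (U := U) [x] a
    simp only [List.singleton_append] at hxa
    exact ⟨x :: a, b, rfl, by omega⟩

theorem validTrace_append {a b : List (Ev E)} (ha : (none : Ev E) ∉ a) (hb : ValidTrace b) :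
    ValidTrace (a ++ b) := by
  rcases eq_or_ne b [] with rfl | hne
  · exact fun h => ha ((List.dropLast_sublist a).subset (by simpa using h))
  · rw [ValidTrace, List.dropLast_append_of_ne_nil hne, List.mem_append]
    exact fun h => h.elim ha hb

theorem validTrace_append_none_iff {t : List (Ev E)} :
    ValidTrace (t ++ [none]) ↔ (none : Ev E) ∉ t := by
  rw [ValidTrace, List.dropLast_concat]

theorem ValidTrace.none_notMem_of_append {a b : List (Ev E)} (h : ValidTrace (a ++ b))
    (hb : b ≠ []) : (none : Ev E) ∉ a := fun ha =>
  h (by rw [List.dropLast_append_of_ne_nil hb]; exact List.mem_append_left _ ha)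

end Traces

def DivExtClosed (D : Set (List (Ev E))) : Prop :=
  ∀ s t, s ∈ D → (none : Ev E) ∉ s → ValidTrace t → s ++ t ∈ D

section Restrict

variable {U : Set E} {m : ℕ} {X Y : Pair E}

theorem append_mem_restrict_snd_of_le (hX : ∀ a b, a ++ b ∈ X.1 → a ∈ X.1)
    {w r : List (Ev E)} (hw : w ∈ X.1) (hnw : (none : Ev E) ∉ w) (hm : m ≤ lengthU U w)
    (hr : ValidTrace r) : w ++ r ∈ (restrict U m X).2 := by
  obtain ⟨a, b, rfl, ha⟩ := exists_append_lengthU_eq w hm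
  rw [List.mem_append, not_or] at hnw
  exact Or.inr ⟨a, b ++ r, hX a b hw, hnw.1, ha, validTrace_append hnw.2 hr, by simp⟩

theorem append_mem_restrict_snd_of_mem_fst (hY : DivExtClosed Y.2) {w r : List (Ev E)}
    (hw : w ∈ (restrict U m Y).1) (hnw : (none : Ev E) ∉ w) (hm : lengthU U w = m)
    (hr : ValidTrace r) : w ++ r ∈ (restrict U m Y).2 := by
  rcases hw with (hw | ⟨s, t, hs, hns, hls, _, rfl⟩) | ⟨hw, -⟩
  · exact Or.inl (hY w r hw hnw hr)
  · have hnt : (none : Ev E) ∉ t := fun h => hnw (List.mem_append_right s h)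
    exact Or.inr ⟨s, t ++ r, hs, hns, hls, validTrace_append hnt hr, by simp⟩
  · exact Or.inr ⟨w, r, hw, hnw, hm, hr, rfl⟩

theorem restrict_le_restrict (hY : DivExtClosed Y.2) (hD : X.2 ⊆ (restrict U m Y).2)
    (hT : ∀ x ∈ X.1, lengthU U x ≤ m → x ∈ (restrict U m Y).1) :
    restrict U m X ≤ restrict U m Y := by
  have hD' : (restrict U m X).2 ⊆ (restrict U m Y).2 := by
    rintro _ (hx | ⟨w, r, hw, hnw, hlw, hr, rfl⟩)
    · exact hD hx
    · exact append_mem_restrict_snd_of_mem_fst hY (hT w hw hlw.le) hnw hlw hr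
  refine ⟨?_, hD'⟩
  rintro x (hx | ⟨hx, hlx⟩)
  · exact Or.inl (hD' hx)
  · exact hT x hx hlx

theorem restrict_zero_pair (R : TD E) :
    restrict U 0 R.pair = ({t | ValidTrace t}, {t | ValidTrace t}) := by
  have hD : (restrict U 0 R.pair).2 = {t | ValidTrace t} := by
    refine Set.Subset.antisymm ?_ fun x hx => ?_
    · rintro _ (hx | ⟨s, t, -, hns, -, ht, rfl⟩)
      exacts [R.valid _ (R.d_sub hx), validTrace_append hns ht]
    · exact Or.inr ⟨[], x, R.nonempty, List.not_mem_nil, by simp [lengthU], hx, rfl⟩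
  refine Prod.ext (Set.Subset.antisymm ?_ fun x hx => Or.inl (hD.symm.subset hx)) hD
  rintro x (hx | ⟨hx, -⟩)
  exacts [hD.subset hx, R.valid x hx]

theorem dU_le_half_mul_of_restrict_succ {X' Y' : Pair E}
    (h₀ : ∃ n, restrict U n X = restrict U n Y)
    (hsucc : ∀ n, restrict U n X = restrict U n Y → restrict U (n + 1) X' = restrict U (n + 1) Y') :
    dU U X' Y' ≤ 1 / 2 * dU U X Y := by
  rw [dU, dU, ← smul_eq_mul, ← Real.sInf_smul_of_nonneg (by norm_num)]
  refine csInf_le_csInf ⟨0, ?_⟩ ?_ ?_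
  · rintro _ ⟨n, -, rfl⟩
    positivity
  · obtain ⟨n, hn⟩ := h₀
    exact ⟨_, Set.smul_mem_smul_set ⟨n, hn, rfl⟩⟩
  · rintro _ ⟨_, ⟨n, hn, rfl⟩, rfl⟩
    exact ⟨n + 1, hsucc n hn, by simp only [smul_eq_mul, pow_succ']⟩

end Restrict

section Seq

variable {U : Set E} {n : ℕ} {P Q Q' : TD E}

theorem seqP_fst_prefix_closed {a b : List (Ev E)} (h : a ++ b ∈ (seqP P Q).1) :
    a ∈ (seqP P Q).1 := by
  rcases eq_or_ne b [] with rfl | hb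
  · simpa using h
  have hP : a ++ b ∈ P.T → a ∈ (seqP P Q).1 := fun hab =>
    Or.inl (Or.inr ⟨P.prefix_closed a b hab, (P.valid _ hab).none_notMem_of_append hb⟩)
  have hQ : ∀ t s, t ++ [none] ∈ P.T → s ∈ Q.T → a ++ b = t ++ s → a ∈ (seqP P Q).1 := by
    intro t s ht hs hab
    rcases List.append_eq_append_iff.mp hab with ⟨c, rfl, -⟩ | ⟨c, rfl, rfl⟩
    · have hc : a ++ (c ++ [none]) ∈ P.T := by simpa using ht
      have hna : (none : Ev E) ∉ a ++ c := validTrace_append_none_iff.mp (P.valid _ ht)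
      exact Or.inl (Or.inr ⟨P.prefix_closed a _ hc, fun h => hna (List.mem_append_left c h)⟩)
    · exact Or.inr ⟨t, c, ht, Q.prefix_closed c b hs, rfl⟩
  rcases h with ((h | ⟨t, s, ht, hs, hab⟩) | ⟨h, -⟩) | ⟨t, s, ht, hs, hab⟩
  · exact hP (P.d_sub h)
  · exact hQ t s ht (Q.d_sub hs) hab
  · exact hP h
  · exact hQ t s ht hs hab

theorem seqP_snd_divExtClosed : DivExtClosed (seqP P Q).2 := by
  rintro _ r (hs | ⟨t, s, ht, hs, rfl⟩) hns hr
  · exact Or.inl (P.div_ext _ r hs hns hr)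
  · have hns' : (none : Ev E) ∉ s := fun h => hns (List.mem_append_right t h)
    exact Or.inr ⟨t, s ++ r, ht, Q.div_ext s r hs hns' hr, by simp⟩

theorem append_mem_restrict_succ_seqP_snd {t s : List (Ev E)} (ht : t ++ [none] ∈ P.T)
    (htU : 0 < lengthU U t) (hs : s ∈ (restrict U n Q.pair).2) :
    t ++ s ∈ (restrict U (n + 1) (seqP P Q)).2 := by
  rcases hs with hs | ⟨u, v, hu, hnu, hlu, hv, rfl⟩
  · exact Or.inl (Or.inr ⟨t, s, ht, hs, rfl⟩)
  · have hnt : (none : Ev E) ∉ t := validTrace_append_none_iff.mp (P.valid _ ht)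
    rw [← List.append_assoc]
    refine append_mem_restrict_snd_of_le (fun a b => seqP_fst_prefix_closed)
      (Or.inr ⟨t, u, ht, hu, rfl⟩) ?_ (by rw [lengthU_append]; omega) hv
    rw [List.mem_append, not_or]
    exact ⟨hnt, hnu⟩

theorem append_mem_restrict_succ_seqP_fst {t s : List (Ev E)} (ht : t ++ [none] ∈ P.T)
    (htU : 0 < lengthU U t) (hs : s ∈ (restrict U n Q.pair).1)
    (hl : lengthU U (t ++ s) ≤ n + 1) : t ++ s ∈ (restrict U (n + 1) (seqP P Q)).1 := by
  rcases hs with hs | ⟨hs, -⟩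
  · exact Or.inl (append_mem_restrict_succ_seqP_snd ht htU hs)
  · exact Or.inr ⟨Or.inr ⟨t, s, ht, hs, rfl⟩, hl⟩

theorem restrict_succ_seqP_le (hguard : ∀ t, t ++ [none] ∈ P.T → 0 < lengthU U t)
    (hn : restrict U n Q.pair = restrict U n Q'.pair) :
    restrict U (n + 1) (seqP P Q) ≤ restrict U (n + 1) (seqP P Q') := by
  have hD : (seqP P Q).2 ⊆ (restrict U (n + 1) (seqP P Q')).2 := by
    rintro _ (hx | ⟨t, s, ht, hs, rfl⟩)
    · exact Or.inl (Or.inl hx)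
    · have hs' : s ∈ (restrict U n Q'.pair).2 := hn ▸ Or.inl hs
      exact append_mem_restrict_succ_seqP_snd ht (hguard t ht) hs'
  refine restrict_le_restrict seqP_snd_divExtClosed hD ?_
  rintro _ ((hx | hx) | ⟨t, s, ht, hs, rfl⟩) hl
  · exact Or.inl (hD hx)
  · exact Or.inr ⟨Or.inl (Or.inr hx), hl⟩
  · have hls : lengthU U s ≤ n := by
      have := hguard t ht
      rw [lengthU_append] at hl
      omega
    have hs' : s ∈ (restrict U n Q'.pair).1 := hn ▸ Or.inr ⟨hs, hls⟩
    exact append_mem_restrict_succ_seqP_fst ht (hguard t ht) hs' hl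

theorem restrict_succ_seqP_eq (hguard : ∀ t, t ++ [none] ∈ P.T → 0 < lengthU U t)
    (hn : restrict U n Q.pair = restrict U n Q'.pair) :
    restrict U (n + 1) (seqP P Q) = restrict U (n + 1) (seqP P Q') :=
  le_antisymm (restrict_succ_seqP_le hguard hn) (restrict_succ_seqP_le hguard hn.symm)

end Seq

/-- Guarded sequential composition is a contraction in its second argument:
if `P` always communicates an event from `U` before it does a ✓, then
`d_U(P ; Q, P ; Q') ≤ (1/2) · d_U(Q, Q')`. -/
theorem seq_contractive_right (U : Set E) (P Q Q' : TD E)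
    (hguard : ∀ t : List (Ev E), t ++ [(none : Ev E)] ∈ P.T →
      ∃ a ∈ U, (some a : Ev E) ∈ t) :
    dU U (seqP P Q) (seqP P Q') ≤ (1 / 2 : ℝ) * dU U Q.pair Q'.pair := by
  have hguardU : ∀ t, t ++ [none] ∈ P.T → 0 < lengthU U t := fun t ht =>
    let ⟨_, ha, hat⟩ := hguard t ht
    lengthU_pos ha hat
  refine dU_le_half_mul_of_restrict_succ ⟨0, ?_⟩ fun n hn => restrict_succ_seqP_eq hguardU hn
  rw [restrict_zero_pair, restrict_zero_pair]

end CSPLL
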